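/- Let γ > 1 and v₋ > 0, and let p(v) = v^{-γ}, Q(v) = v^{1-γ}/(γ-1). There exists δ* > 0 such that for every δ with 0 < δ < δ* and every pair v, w > 0 satisfying |p(v) − p(w)| < δ and |p(w) − p(v₋)| < δ, one has Q(v|w) ≥ (p(v) − p(w))² / (2γ · p(w)^{1+1/γ}) − ((1+γ)/(3γ²)) · (p(v) − p(w))³ / p(w)^{2+1/γ}. -/

import Mathlib

open Real Set

/-- Weighted AM-GM step. -/
lemma amgm_step (γ x w : ℝ) (hγ : 1 < γ) (hx : 0 < x) (hw : 0 < w) :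
    (2*γ+1) * w^(γ+1) ≤ γ * x^(γ+1) + (γ+1) * (w^(2*γ+1) * x^(-γ)) := by
  have h2γ : (0:ℝ) < 2*γ+1 := by linarith
  have hγ0 : (0:ℝ) < γ := by linarith
  have hw1 : (0:ℝ) ≤ γ/(2*γ+1) := by positivity
  have hw2 : (0:ℝ) ≤ (γ+1)/(2*γ+1) := by positivity
  have hp1 : (0:ℝ) ≤ x^(γ+1) := (Real.rpow_pos_of_pos hx _).le
  have hp2 : (0:ℝ) ≤ w^(2*γ+1) * x^(-γ) := by positivity
  have hsum : γ/(2*γ+1) + (γ+1)/(2*γ+1) = 1 := by field_simp; ring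
  have key := Real.geom_mean_le_arith_mean2_weighted hw1 hw2 hp1 hp2 hsum
  have hprod : (x^(γ+1)) ^ (γ/(2*γ+1)) * (w^(2*γ+1) * x^(-γ)) ^ ((γ+1)/(2*γ+1))
      = w^(γ+1) := by
    rw [Real.mul_rpow (by positivity) (by positivity),
      ← Real.rpow_mul hx.le, ← Real.rpow_mul hw.le, ← Real.rpow_mul hx.le,
      show (2*γ+1)*((γ+1)/(2*γ+1)) = γ+1 from by field_simp; try ring,
      mul_left_comm, ← Real.rpow_add hx,
      show (γ+1)*(γ/(2*γ+1)) + -γ*((γ+1)/(2*γ+1)) = 0 from by field_simp; try ring,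
      Real.rpow_zero, mul_one]
  rw [hprod] at key
  have h3 := mul_le_mul_of_nonneg_left key h2γ.le
  have e : (2*γ+1) * (γ/(2*γ+1) * x^(γ+1) + (γ+1)/(2*γ+1) * (w^(2*γ+1)*x^(-γ)))
      = γ * x^(γ+1) + (γ+1) * (w^(2*γ+1)*x^(-γ)) := by field_simp; try ring
  linarith [h3, e.le, e.ge]

/-- The bracket in the derivative is nonpositive. -/
lemma bracket_nonpos (γ x w : ℝ) (hγ : 1 < γ) (hx : 0 < x) (hw : 0 < w) :
    γ*(w^(γ+1)*x^(-γ-1) - 1) - (γ+1)*w^(2*γ+1)*x^(-γ-1)*(x^(-γ)-w^(-γ)) ≤ 0 := by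
  have hy : (0:ℝ) < x^(-γ-1) := Real.rpow_pos_of_pos hx _
  have i1 : x^(γ+1) * x^(-γ-1) = 1 := by
    rw [← Real.rpow_add hx, show γ+1+(-γ-1) = (0:ℝ) from by ring, Real.rpow_zero]
  have i2 : w^(2*γ+1) * w^(-γ) = w^(γ+1) := by
    rw [← Real.rpow_add hw, show 2*γ+1+-γ = γ+1 from by ring]
  have e : γ*(w^(γ+1)*x^(-γ-1) - 1) - (γ+1)*w^(2*γ+1)*x^(-γ-1)*(x^(-γ)-w^(-γ))
      = (2*γ+1)*(w^(γ+1)*x^(-γ-1)) - γ - (γ+1)*(w^(2*γ+1)*x^(-γ)*x^(-γ-1)) := by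
    linear_combination ((γ+1)*x^(-γ-1)) * i2
  have A := amgm_step γ x w hγ hx hw
  have hA2 : (2*γ+1)*(w^(γ+1)*x^(-γ-1))
      ≤ γ + (γ+1)*(w^(2*γ+1)*x^(-γ)*x^(-γ-1)) := by
    have h := mul_le_mul_of_nonneg_right A hy.le
    calc (2*γ+1)*(w^(γ+1)*x^(-γ-1)) = (2*γ+1)*w^(γ+1)*x^(-γ-1) := by ring
      _ ≤ (γ*x^(γ+1) + (γ+1)*(w^(2*γ+1)*x^(-γ)))*x^(-γ-1) := h
      _ = γ*(x^(γ+1)*x^(-γ-1)) + (γ+1)*(w^(2*γ+1)*x^(-γ)*x^(-γ-1)) := by ring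
      _ = γ + (γ+1)*(w^(2*γ+1)*x^(-γ)*x^(-γ-1)) := by rw [i1]; ring
  linarith [e.le, e.ge, hA2]

lemma F_nonneg (γ w v : ℝ) (hγ : 1 < γ) (hw : 0 < w) (hv : 0 < v) :
    0 ≤ (v^(1-γ) - w^(1-γ))/(γ-1) + w^(-γ)*(v-w)
      - ((v^(-γ)-w^(-γ))^2 * w^(γ+1)/(2*γ)
        - (1+γ)/(3*γ^2)*(v^(-γ)-w^(-γ))^3*w^(2*γ+1)) := by
  have hγ0 : (0:ℝ) < γ := by linarith
  have hγne : γ ≠ 0 := hγ0.ne'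
  have hγ1 : γ - 1 ≠ 0 := by intro h; linarith [sub_eq_zero.mp h]
  set F : ℝ → ℝ := fun x => (x^(1-γ) - w^(1-γ))/(γ-1) + w^(-γ)*(x-w)
      - ((x^(-γ)-w^(-γ))^2 * w^(γ+1)/(2*γ)
        - (1+γ)/(3*γ^2)*(x^(-γ)-w^(-γ))^3*w^(2*γ+1)) with hFdef
  set E : ℝ → ℝ := fun x => (x^(-γ)-w^(-γ))
      * (γ*(w^(γ+1)*x^(-γ-1) - 1) - (γ+1)*w^(2*γ+1)*x^(-γ-1)*(x^(-γ)-w^(-γ))) / γ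
    with hEdef
  have hder : ∀ x, 0 < x → HasDerivAt F (E x) x := by
    intro x hx
    have h1 : HasDerivAt (fun y : ℝ => y^(1-γ)) ((1-γ)*x^(1-γ-1)) x :=
      Real.hasDerivAt_rpow_const (Or.inl hx.ne')
    have h2 : HasDerivAt (fun y : ℝ => y^(-γ)) ((-γ)*x^(-γ-1)) x :=
      Real.hasDerivAt_rpow_const (Or.inl hx.ne')
    have hD : HasDerivAt (fun y : ℝ => y^(-γ) - w^(-γ)) ((-γ)*x^(-γ-1)) x := h2.sub_const _
    have hall := (((h1.sub_const (w^(1-γ))).div_const (γ-1)).add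
        (((hasDerivAt_id x).sub_const w).const_mul (w^(-γ)))).sub
      ((((hD.pow 2).mul_const (w^(γ+1))).div_const (2*γ)).sub
        (((hD.pow 3).const_mul ((1+γ)/(3*γ^2))).mul_const (w^(2*γ+1))))
    convert hall using 1
    case e'_4 => rfl
    case e'_5 => rfl
    case e'_8 => rfl
    rw [hEdef]
    rw [show (1:ℝ)-γ-1 = -γ from by ring]
    norm_num
    field_simp
    ring
  have hFw : F w = 0 := by simp [hFdef]
  rcases le_total w v with h | h
  · have mono : MonotoneOn F (Icc w v) := by
      apply monotoneOn_of_deriv_nonneg (convex_Icc w v)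
      · intro x hx
        exact (hder x (lt_of_lt_of_le hw hx.1)).continuousAt.continuousWithinAt
      · rw [interior_Icc]; intro x hx
        exact (hder x (hw.trans hx.1)).differentiableAt.differentiableWithinAt
      · rw [interior_Icc]; intro x hx
        rw [(hder x (hw.trans hx.1)).deriv, hEdef]
        have hD : x^(-γ) - w^(-γ) ≤ 0 := by
          have := Real.rpow_le_rpow_of_nonpos hw hx.1.le (by linarith : -γ ≤ 0)
          linarith
        have hK := bracket_nonpos γ x w hγ (hw.trans hx.1) hw
        exact div_nonneg (by nlinarith [hD, hK]) hγ0.le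
    have := mono (left_mem_Icc.2 h) (right_mem_Icc.2 h) h
    rw [hFw] at this
    simpa [hFdef] using this
  · have anti : AntitoneOn F (Icc v w) := by
      apply antitoneOn_of_deriv_nonpos (convex_Icc v w)
      · intro x hx
        exact (hder x (lt_of_lt_of_le hv hx.1)).continuousAt.continuousWithinAt
      · rw [interior_Icc]; intro x hx
        exact (hder x (hv.trans hx.1)).differentiableAt.differentiableWithinAt
      · rw [interior_Icc]; intro x hx
        rw [(hder x (hv.trans hx.1)).deriv, hEdef]
        have hD : 0 ≤ x^(-γ) - w^(-γ) := by
          have := Real.rpow_le_rpow_of_nonpos (hv.trans hx.1) hx.2.le (by linarith : -γ ≤ 0)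
          linarith
        have hK := bracket_nonpos γ x w hγ (hv.trans hx.1) hw
        exact div_nonpos_of_nonpos_of_nonneg (mul_nonpos_of_nonneg_of_nonpos hD hK) hγ0.le
    have := anti (left_mem_Icc.2 h) (right_mem_Icc.2 h) h
    rw [hFw] at this
    simpa [hFdef] using this

/-- Lower bound on the relative internal energy: for `γ > 1`, `v₋ > 0`,
`p(v) = v^(-γ)`, `Q(v|w) = (v^(1-γ) - w^(1-γ))/(γ-1) + w^(-γ)(v-w)`, there is
`δ* > 0` such that for `0 < δ < δ*` and `v, w > 0` with `|p(v)-p(w)| < δ`,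
`|p(w)-p(v₋)| < δ`:
`Q(v|w) ≥ (p(v)-p(w))²/(2γ p(w)^(1+1/γ)) - ((1+γ)/(3γ²))(p(v)-p(w))³/p(w)^(2+1/γ)`. -/
theorem stmt_4 (γ vminus : ℝ) (hγ : 1 < γ) (hv : 0 < vminus) :
    ∃ δstar > 0, ∀ δ : ℝ, 0 < δ → δ < δstar →
      ∀ v w : ℝ, 0 < v → 0 < w →
        |v ^ (-γ) - w ^ (-γ)| < δ → |w ^ (-γ) - vminus ^ (-γ)| < δ →
        (v ^ (1 - γ) - w ^ (1 - γ)) / (γ - 1) + w ^ (-γ) * (v - w)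
          ≥ (v ^ (-γ) - w ^ (-γ)) ^ 2 / (2 * γ * (w ^ (-γ)) ^ (1 + 1 / γ))
            - (1 + γ) / (3 * γ ^ 2)
              * (v ^ (-γ) - w ^ (-γ)) ^ 3 / (w ^ (-γ)) ^ (2 + 1 / γ) := by
  refine ⟨1, one_pos, fun δ _ _ v w hv0 hw0 _ _ => ?_⟩
  have hγ0 : (0:ℝ) < γ := by linarith
  have hγne : γ ≠ 0 := hγ0.ne'
  have hc1 : (w^(-γ))^(1+1/γ) = (w^(γ+1))⁻¹ := by
    rw [← Real.rpow_mul hw0.le, show -γ*(1+1/γ) = -(γ+1) from by field_simp; try ring,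
      Real.rpow_neg hw0.le]
  have hc2 : (w^(-γ))^(2+1/γ) = (w^(2*γ+1))⁻¹ := by
    rw [← Real.rpow_mul hw0.le, show -γ*(2+1/γ) = -(2*γ+1) from by field_simp; try ring,
      Real.rpow_neg hw0.le]
  rw [hc1, hc2, ge_iff_le, ← sub_nonneg]
  have h := F_nonneg γ w v hγ hw0 hv0
  have hW1 : (0:ℝ) < w^(γ+1) := Real.rpow_pos_of_pos hw0 _
  have hW2 : (0:ℝ) < w^(2*γ+1) := Real.rpow_pos_of_pos hw0 _
  have heq : (v^(1-γ) - w^(1-γ))/(γ-1) + w^(-γ)*(v-w)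
      - ((v^(-γ)-w^(-γ))^2 / (2*γ*(w^(γ+1))⁻¹)
        - (1+γ)/(3*γ^2)*(v^(-γ)-w^(-γ))^3/(w^(2*γ+1))⁻¹)
      = (v^(1-γ) - w^(1-γ))/(γ-1) + w^(-γ)*(v-w)
      - ((v^(-γ)-w^(-γ))^2 * w^(γ+1)/(2*γ)
        - (1+γ)/(3*γ^2)*(v^(-γ)-w^(-γ))^3*w^(2*γ+1)) := by
    field_simp
  rw [heq]
  exact h
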